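/- arXiv:2502.07300 — 5 statements merged into one kernel-verified Lean document; each statement's English description precedes it below -/
import Mathlib

section
/- Let p, q ≥ 1, N = p + q, let (t_i, a_i)_{i=1}^r be a good parameter, and let λ ∈ ℤ^N be dominant, satisfying the matching condition ν = P ⊔ Q. Then every element of I occurs at least once in the multiset ν_{<j} ⊔ ν_{>j} (i.e., I ⊆ ν_{<j} ⊔ ν_{>j}). -/
open Finset

/-- The multiset `P(λ) = {λ_i − (N−1)/2 + (p−i) : 1 ≤ i ≤ p}` of rationals,
for `N = p + q` and a weight `λ : ℕ → ℤ` (1-based indexing). -/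
def Pms (p q : ℕ) (lam : ℕ → ℤ) : Multiset ℚ :=
  (Finset.Icc 1 p).val.map
    (fun i => (lam i : ℚ) - ((p : ℚ) + (q : ℚ) - 1) / 2 + ((p : ℚ) - (i : ℚ)))

/-- The multiset `Q(λ) = {λ_{p+i} + (N−1)/2 − (i−1) : 1 ≤ i ≤ q}`. -/
def Qms (p q : ℕ) (lam : ℕ → ℤ) : Multiset ℚ :=
  (Finset.Icc 1 q).val.map
    (fun i => (lam (p + i) : ℚ) + ((p : ℚ) + (q : ℚ) - 1) / 2 - ((i : ℚ) - 1))

/-- Dominance: `λ_1 ≥ … ≥ λ_p` and `λ_{p+1} ≥ … ≥ λ_{p+q}`. -/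
def Dominant (p q : ℕ) (lam : ℕ → ℤ) : Prop :=
  (∀ i, 1 ≤ i → i < p → lam (i + 1) ≤ lam i) ∧
  (∀ i, p + 1 ≤ i → i < p + q → lam (i + 1) ≤ lam i)

/-- `p' = #{i : 1 ≤ i ≤ p, λ_i = λ_p}`. -/
def pPrime (p : ℕ) (lam : ℕ → ℤ) : ℕ :=
  ((Finset.Icc 1 p).filter (fun i => lam i = lam p)).card

/-- `q' = #{i : p+1 ≤ i ≤ p+q, λ_i = λ_{p+1}}`. -/
def qPrime (p q : ℕ) (lam : ℕ → ℤ) : ℕ :=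
  ((Finset.Icc (p + 1) (p + q)).filter (fun i => lam i = lam (p + 1))).card

/-- The segment `P' = {λ_p − (N−1)/2 + k : 0 ≤ k ≤ p'−1}`. -/
def Pseg (p q : ℕ) (lam : ℕ → ℤ) : Finset ℚ :=
  (Finset.range (pPrime p lam)).image
    (fun k : ℕ => (lam p : ℚ) - ((p : ℚ) + (q : ℚ) - 1) / 2 + (k : ℚ))

/-- The segment `Q' = {λ_{p+1} + (N−1)/2 − k : 0 ≤ k ≤ q'−1}`. -/
def Qseg (p q : ℕ) (lam : ℕ → ℤ) : Finset ℚ :=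
  (Finset.range (qPrime p q lam)).image
    (fun k : ℕ => (lam (p + 1) : ℚ) + ((p : ℚ) + (q : ℚ) - 1) / 2 - (k : ℚ))

/-- `I = P' ∩ Q'`. -/
def Iseg (p q : ℕ) (lam : ℕ → ℤ) : Finset ℚ := Pseg p q lam ∩ Qseg p q lam

/-- A good parameter `(t_1,a_1),…,(t_r,a_r)` for `U(p,q)` (1-based indexing). -/
structure GoodParam (p q r : ℕ) (t : ℕ → ℤ) (a : ℕ → ℕ) : Prop where
  hr : 1 ≤ r
  hpos : ∀ i ∈ Finset.Icc 1 r, 0 < a i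
  hsum : ∑ i ∈ Finset.Icc 1 r, a i = p + q
  heven : ∀ i ∈ Finset.Icc 1 r, Even (t i + (a i : ℤ) + (p : ℤ) + (q : ℤ))
  hdec : ∀ i, 1 ≤ i → i < r → t (i + 1) ≤ t i
  hadec : ∀ i, 1 ≤ i → i < r → t i = t (i + 1) → a (i + 1) ≤ a i

/-- The segment `ν_i = {(t_i − a_i + 1)/2 + k : 0 ≤ k ≤ a_i − 1}` as a multiset of rationals. -/
def nu (t : ℕ → ℤ) (a : ℕ → ℕ) (i : ℕ) : Multiset ℚ :=
  (Multiset.range (a i)).map (fun k => ((t i : ℚ) - (a i : ℚ) + 1) / 2 + (k : ℚ))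

/-- `ν_{<j} = ν_1 ⊔ … ⊔ ν_{j−1}`. -/
def nuLt (t : ℕ → ℤ) (a : ℕ → ℕ) (j : ℕ) : Multiset ℚ :=
  ∑ k ∈ Finset.Icc 1 (j - 1), nu t a k

/-- `ν_{>j} = ν_{j+1} ⊔ … ⊔ ν_r`. -/
def nuGt (t : ℕ → ℤ) (a : ℕ → ℕ) (r j : ℕ) : Multiset ℚ :=
  ∑ k ∈ Finset.Icc (j + 1) r, nu t a k

/-- `ν = ν_1 ⊔ … ⊔ ν_r`. -/
def nuAll (t : ℕ → ℤ) (a : ℕ → ℕ) (r : ℕ) : Multiset ℚ :=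
  ∑ k ∈ Finset.Icc 1 r, nu t a k

/-- `j` is the least index with `a_1 + … + a_j ≥ p`. -/
structure LeastJ (p r : ℕ) (a : ℕ → ℕ) (j : ℕ) : Prop where
  h1 : 1 ≤ j
  hle : j ≤ r
  hge : p ≤ ∑ ℓ ∈ Finset.Icc 1 j, a ℓ
  hmin : ∀ i, i < j → ∑ ℓ ∈ Finset.Icc 1 i, a ℓ < p

/-- `p_j = p − (a_1 + … + a_{j−1})`. -/
def pj (p : ℕ) (a : ℕ → ℕ) (j : ℕ) : ℕ := p - ∑ ℓ ∈ Finset.Icc 1 (j - 1), a ℓ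

/-- `q_j = q − (a_{j+1} + … + a_r)`. -/
def qj (q r : ℕ) (a : ℕ → ℕ) (j : ℕ) : ℕ := q - ∑ ℓ ∈ Finset.Icc (j + 1) r, a ℓ

/-- The nonvanishing condition: `ν_{<j}` and `ν_{>j}` are multiplicity free,
`#(ν_j ∩ ν_{<j}) ≤ q_j` and `#(ν_j ∩ ν_{>j}) ≤ p_j`. -/
def NonVanishing (p q r : ℕ) (t : ℕ → ℤ) (a : ℕ → ℕ) (j : ℕ) : Prop :=
  (nuLt t a j).Nodup ∧ (nuGt t a r j).Nodup ∧
  Multiset.card ((nu t a j).filter (fun x => x ∈ nuLt t a j)) ≤ qj q r a j ∧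
  Multiset.card ((nu t a j).filter (fun x => x ∈ nuGt t a r j)) ≤ pj p a j

/-!
An element of `I = P' ∩ Q'` lies in both `P` and `Q`: on the last `p'` indices `λ_i = λ_p`, so
`P' ⊆ P`, and on the first `q'` indices of the second block `λ_{p+i} = λ_{p+1}`, so `Q' ⊆ Q`.
By the matching condition it therefore occurs at least twice in `ν = ν_{<j} ⊔ ν_j ⊔ ν_{>j}`,
while the segment `ν_j` has no repeated entries and contributes at most one copy.
-/

lemma mem_add_of_two_le_count_of_nodup {α : Type*} [DecidableEq α] {s m u : Multiset α} {x : α}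
    (hm : m.Nodup) (h : 2 ≤ (s + m + u).count x) : x ∈ s + u := by
  have hmx := Multiset.nodup_iff_count_le_one.mp hm x
  rw [← Multiset.one_le_count_iff_mem, Multiset.count_add]
  rw [Multiset.count_add, Multiset.count_add] at h
  omega

section AntitoneFiber

variable {α : Type*} [PartialOrder α] [DecidableEq α] {f : ℕ → α} {m n k : ℕ}

lemma AntitoneOn.apply_sub_eq_of_lt_card (hf : AntitoneOn f (Set.Icc m n))
    (hk : k < #{i ∈ Icc m n | f i = f n}) : f (n - k) = f n := by
  have hkn : k < n + 1 - m := hk.trans_le ((card_filter_le _ _).trans (Nat.card_Icc m n).le)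
  by_contra hne
  have hlt : f n < f (n - k) :=
    (hf ⟨by omega, by omega⟩ ⟨by omega, le_rfl⟩ (Nat.sub_le n k)).lt_of_ne' hne
  have hsub : {i ∈ Icc m n | f i = f n} ⊆ Ioc (n - k) n := by
    intro i hi
    rw [mem_filter, mem_Icc] at hi
    rw [mem_Ioc]
    refine ⟨lt_of_not_ge fun hik => ?_, hi.1.2⟩
    exact (hi.2 ▸ hf ⟨hi.1.1, by omega⟩ ⟨by omega, by omega⟩ hik).not_gt hlt
  have := (card_le_card hsub).trans_eq (Nat.card_Ioc _ _)
  omega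

lemma AntitoneOn.apply_add_eq_of_lt_card (hf : AntitoneOn f (Set.Icc m n))
    (hk : k < #{i ∈ Icc m n | f i = f m}) : f (m + k) = f m := by
  have hkn : k < n + 1 - m := hk.trans_le ((card_filter_le _ _).trans (Nat.card_Icc m n).le)
  by_contra hne
  have hlt : f (m + k) < f m :=
    (hf ⟨le_rfl, by omega⟩ ⟨by omega, by omega⟩ (Nat.le_add_right m k)).lt_of_ne hne
  have hsub : {i ∈ Icc m n | f i = f m} ⊆ Ico m (m + k) := by
    intro i hi
    rw [mem_filter, mem_Icc] at hi
    rw [mem_Ico]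
    refine ⟨hi.1.1, lt_of_not_ge fun hik => ?_⟩
    exact (hi.2 ▸ hf ⟨by omega, by omega⟩ ⟨by omega, hi.1.2⟩ hik).not_gt hlt
  have := (card_le_card hsub).trans_eq (Nat.card_Ico _ _)
  omega

end AntitoneFiber

section Weight

variable {p q : ℕ} {lam : ℕ → ℤ}

lemma Dominant.antitoneOn_Icc_one (hdom : Dominant p q lam) : AntitoneOn lam (Set.Icc 1 p) :=
  antitoneOn_of_add_one_le Set.ordConnected_Icc fun i _ hi hi' => hdom.1 i hi.1 hi'.2

lemma Dominant.antitoneOn_Icc_succ (hdom : Dominant p q lam) :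
    AntitoneOn lam (Set.Icc (p + 1) (p + q)) :=
  antitoneOn_of_add_one_le Set.ordConnected_Icc fun i _ hi hi' => hdom.2 i hi.1 hi'.2

lemma mem_Pms_of_mem_Pseg (hdom : Dominant p q lam) {x : ℚ} (hx : x ∈ Pseg p q lam) :
    x ∈ Pms p q lam := by
  obtain ⟨k, hk, rfl⟩ := mem_image.mp hx
  rw [mem_range] at hk
  have hkp : k < p := hk.trans_le ((card_filter_le _ _).trans (Nat.card_Icc 1 p).le)
  refine Multiset.mem_map.mpr ⟨p - k, mem_val.mpr (mem_Icc.mpr ⟨by omega, Nat.sub_le p k⟩), ?_⟩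
  rw [hdom.antitoneOn_Icc_one.apply_sub_eq_of_lt_card hk, Nat.cast_sub hkp.le]
  ring

lemma mem_Qms_of_mem_Qseg (hdom : Dominant p q lam) {x : ℚ} (hx : x ∈ Qseg p q lam) :
    x ∈ Qms p q lam := by
  obtain ⟨k, hk, rfl⟩ := mem_image.mp hx
  rw [mem_range] at hk
  have hkq : k < q := hk.trans_le ((card_filter_le _ _).trans (by simp))
  refine Multiset.mem_map.mpr ⟨k + 1, mem_val.mpr (mem_Icc.mpr ⟨by omega, hkq⟩), ?_⟩
  rw [← add_assoc, add_right_comm, hdom.antitoneOn_Icc_succ.apply_add_eq_of_lt_card hk]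
  push_cast
  ring

end Weight

lemma nu_nodup (t : ℕ → ℤ) (a : ℕ → ℕ) (i : ℕ) : (nu t a i).Nodup := by
  refine Multiset.Nodup.map (add_right_injective _) ?_
  simpa [Multiset.bind_singleton] using (Multiset.nodup_range _).map Nat.cast_injective

lemma nuAll_eq_add {t : ℕ → ℤ} {a : ℕ → ℕ} {r j : ℕ} (hj : 1 ≤ j) (hjr : j ≤ r) :
    nuAll t a r = nuLt t a j + nu t a j + nuGt t a r j := by
  obtain ⟨i, rfl⟩ := Nat.exists_eq_add_of_le' hj
  have hIcc : ∀ n, Icc 1 n = Ioc 0 n := Icc_add_one_left_eq_Ioc 0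
  simp only [nuAll, nuLt, nuGt, Nat.add_sub_cancel, hIcc, Icc_add_one_left_eq_Ioc]
  rw [← sum_Ioc_succ_top (Nat.zero_le i), sum_Ioc_consecutive _ (Nat.zero_le _) hjr]

theorem statement5_general (p q r j : ℕ) (t : ℕ → ℤ) (a : ℕ → ℕ)
    (hj : LeastJ p r a j)
    (lam : ℕ → ℤ) (hdom : Dominant p q lam)
    (hmatch : nuAll t a r = Pms p q lam + Qms p q lam) :
    ∀ x ∈ Iseg p q lam, x ∈ nuLt t a j + nuGt t a r j := by
  intro x hx
  rw [Iseg, mem_inter] at hx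
  have hP := Multiset.one_le_count_iff_mem.mpr (mem_Pms_of_mem_Pseg hdom hx.1)
  have hQ := Multiset.one_le_count_iff_mem.mpr (mem_Qms_of_mem_Qseg hdom hx.2)
  apply mem_add_of_two_le_count_of_nodup (nu_nodup t a j)
  rw [← nuAll_eq_add hj.h1 hj.hle, hmatch, Multiset.count_add]
  omega

/-- under the matching condition `ν = P ⊔ Q`, every element of `I` occurs
in the multiset `ν_{<j} ⊔ ν_{>j}`. -/
theorem statement5 (p q r j : ℕ) (hp : 1 ≤ p) (hq : 1 ≤ q) (t : ℕ → ℤ) (a : ℕ → ℕ)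
    (hgp : GoodParam p q r t a) (hj : LeastJ p r a j)
    (lam : ℕ → ℤ) (hdom : Dominant p q lam)
    (hmatch : nuAll t a r = Pms p q lam + Qms p q lam) :
    ∀ x ∈ Iseg p q lam, x ∈ nuLt t a j + nuGt t a r j :=
  statement5_general p q r j t a hj lam hdom hmatch
end

section
/- Let p, q ≥ 1, N = p + q, let (t_i, a_i)_{i=1}^r be a good parameter satisfying the nonvanishing condition, and let λ ∈ ℤ^N be dominant, satisfying the matching condition ν = P ⊔ Q. If some element of I occurs in both ν_{<j} and ν_{>j}, and I ∩ ν_j ≠ ∅, then ν_j ⊆ I, I ⊆ ν_{>j}, and q_j = 0. -/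
open Finset

/-!
All the multisets live in the coset `(N - 1)/2 + ℤ`; there `ν_i` is the segment with end points
`(t_i ∓ (a_i - 1))/2`, `P'` is the lowest run of `P` and `Q'` the highest run of `Q`. Hence every
point of `I` occurs exactly twice in `P ⊔ Q = ν`. A point `x ∈ I` lying in `ν_{<j}` and in
`ν_{>j}` is therefore not in `ν_j`, and it cannot lie below `ν_j`: the segment `ν_k`, `k < j`,
containing it has `t_k ≥ t_j` and would swallow `ν_j`, giving `#(ν_j ∩ ν_{<j}) = a_j > q_j`.
So `x` lies above `ν_j`; the point just above `ν_j` is in `I` by convexity, hence in some `ν_m`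
with `m > j`, and `t_m ≤ t_j` makes `ν_m ⊇ ν_j`. From `ν_j ⊆ ν_{>j}` the `p_j`-bound gives
`q_j = 0` and the count gives `I ⊆ ν_{>j}`. Finally every point of `ν_j` then occurs twice in
`P ⊔ Q`, while the point below `P'` is not in `P` and the point below `Q'` is not in `Q`; so
`ν_j` starts inside `I`, and it ends below `x ∈ I`.
-/

theorem AddCommGroup.modEq_one_iff {α : Type*} [Ring α] {a b : α} :
    a ≡ b [PMOD (1 : α)] ↔ ∃ m : ℤ, b = a + m := by
  simp [AddCommGroup.modEq_iff_eq_add_zsmul]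

section Grid

variable {α : Type*} [Field α] [LinearOrder α] [IsStrictOrderedRing α] {a b c s z : α}

theorem AddCommGroup.ModEq.add_one_le_of_lt (h : a ≡ b [PMOD (1 : α)]) (hab : a < b) :
    a + 1 ≤ b := by
  obtain ⟨m, rfl⟩ := AddCommGroup.modEq_one_iff.1 h
  have hm : (0 : α) < m := by linarith
  have : (1 : α) ≤ m := by exact_mod_cast (Int.cast_pos.1 hm : 0 < m)
  linarith

theorem exists_lt_add_eq_iff {n : ℕ} (hs : s ≡ c [PMOD (1 : α)]) :
    (∃ k < n, s + k = z) ↔ s ≤ z ∧ z ≤ s + n - 1 ∧ z ≡ c [PMOD 1] := by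
  constructor
  · rintro ⟨k, hk, rfl⟩
    have : (k : α) + 1 ≤ n := by exact_mod_cast hk
    refine ⟨le_add_of_nonneg_right k.cast_nonneg, by linarith, ?_⟩
    exact (AddCommGroup.modEq_one_iff.2 ⟨k, by simp⟩).symm.trans hs
  · rintro ⟨hsz, hzn, hz⟩
    obtain ⟨m, rfl⟩ := AddCommGroup.modEq_one_iff.1 (hs.trans hz.symm)
    lift m to ℕ using (by exact_mod_cast (by linarith : (0 : α) ≤ m))
    exact ⟨m, by exact_mod_cast (by push_cast at hzn ⊢; linarith : (m : α) < n), by simp⟩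

theorem exists_lt_sub_eq_iff {n : ℕ} (hs : s ≡ c [PMOD (1 : α)]) :
    (∃ k < n, s - k = z) ↔ s - n + 1 ≤ z ∧ z ≤ s ∧ z ≡ c [PMOD 1] := by
  have h := exists_lt_add_eq_iff (n := n) (z := -z) (AddCommGroup.neg_modEq_neg.2 hs)
  rw [AddCommGroup.neg_modEq_neg] at h
  constructor
  · rintro ⟨k, hk, rfl⟩
    obtain ⟨h1, h2, h3⟩ := h.1 ⟨k, hk, by ring⟩
    exact ⟨by linarith, by linarith, h3⟩
  · rintro ⟨h1, h2, h3⟩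
    obtain ⟨k, hk, hkz⟩ := h.2 ⟨by linarith, by linarith, h3⟩
    exact ⟨k, hk, by linear_combination -hkz⟩

end Grid

theorem antitoneOn_Icc_of_succ_le {β : Type*} [Preorder β] {f : ℕ → β} {lo hi : ℕ}
    (h : ∀ i, lo ≤ i → i < hi → f (i + 1) ≤ f i) : AntitoneOn f (Set.Icc lo hi) :=
  antitoneOn_of_succ_le Set.ordConnected_Icc fun i _ hmem hsi => by
    rw [Order.succ_eq_add_one] at hsi ⊢
    exact h i hmem.1 (by have := hsi.2; omega)

section AntitoneFiber

variable {β : Type*} [LinearOrder β] {f : ℕ → β} {lo hi i : ℕ}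

theorem AntitoneOn.eq_left_iff_lt_add_card (hf : AntitoneOn f (Set.Icc lo hi))
    (hmem : i ∈ Set.Icc lo hi) : f i = f lo ↔ i < lo + #{ℓ ∈ Icc lo hi | f ℓ = f lo} := by
  obtain ⟨hlo, hhi⟩ := hmem
  have hlo_mem : lo ∈ Set.Icc lo hi := ⟨le_rfl, hlo.trans hhi⟩
  constructor
  · intro h
    have hsub : Icc lo i ⊆ {ℓ ∈ Icc lo hi | f ℓ = f lo} := fun ℓ hℓ => by
      rw [mem_Icc] at hℓ
      have hℓ' : ℓ ∈ Set.Icc lo hi := ⟨hℓ.1, hℓ.2.trans hhi⟩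
      refine mem_filter.2 ⟨mem_Icc.2 hℓ', le_antisymm (hf hlo_mem hℓ' hℓ.1) ?_⟩
      exact h ▸ hf hℓ' ⟨hlo, hhi⟩ hℓ.2
    have := card_le_card hsub
    rw [Nat.card_Icc] at this
    omega
  · intro h
    by_contra hne
    have hlt : f i < f lo := lt_of_le_of_ne (hf hlo_mem ⟨hlo, hhi⟩ hlo) hne
    have hsub : {ℓ ∈ Icc lo hi | f ℓ = f lo} ⊆ Ico lo i := fun ℓ hℓ => by
      obtain ⟨hℓ, hfℓ⟩ := mem_filter.1 hℓ
      rw [mem_Icc] at hℓ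
      refine mem_Ico.2 ⟨hℓ.1, lt_of_not_ge fun hiℓ => ?_⟩
      exact (hf ⟨hlo, hhi⟩ hℓ hiℓ).not_gt (hfℓ ▸ hlt)
    have := card_le_card hsub
    rw [Nat.card_Ico] at this
    omega

theorem AntitoneOn.eq_right_iff_lt_add_card (hf : AntitoneOn f (Set.Icc lo hi))
    (hmem : i ∈ Set.Icc lo hi) : f i = f hi ↔ hi < i + #{ℓ ∈ Icc lo hi | f ℓ = f hi} := by
  obtain ⟨hlo, hhi⟩ := hmem
  have hhi_mem : hi ∈ Set.Icc lo hi := ⟨hlo.trans hhi, le_rfl⟩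
  constructor
  · intro h
    have hsub : Icc i hi ⊆ {ℓ ∈ Icc lo hi | f ℓ = f hi} := fun ℓ hℓ => by
      rw [mem_Icc] at hℓ
      have hℓ' : ℓ ∈ Set.Icc lo hi := ⟨hlo.trans hℓ.1, hℓ.2⟩
      refine mem_filter.2 ⟨mem_Icc.2 hℓ', le_antisymm ?_ (hf hℓ' hhi_mem hℓ.2)⟩
      exact h ▸ hf ⟨hlo, hhi⟩ hℓ' hℓ.1
    have := card_le_card hsub
    rw [Nat.card_Icc] at this
    omega
  · intro h
    by_contra hne
    have hlt : f hi < f i := lt_of_le_of_ne (hf ⟨hlo, hhi⟩ hhi_mem hhi) (Ne.symm hne)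
    have hsub : {ℓ ∈ Icc lo hi | f ℓ = f hi} ⊆ Ioc i hi := fun ℓ hℓ => by
      obtain ⟨hℓ, hfℓ⟩ := mem_filter.1 hℓ
      rw [mem_Icc] at hℓ
      refine mem_Ioc.2 ⟨lt_of_not_ge fun hℓi => ?_, hℓ.2⟩
      exact (hf hℓ ⟨hlo, hhi⟩ hℓi).not_gt (hfℓ ▸ hlt)
    have := card_le_card hsub
    rw [Nat.card_Ioc] at this
    omega

end AntitoneFiber

theorem sum_Icc_one_eq_add_add {M : Type*} [AddCommMonoid M] (f : ℕ → M) {j r : ℕ}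
    (h1 : 1 ≤ j) (h2 : j ≤ r) :
    ∑ i ∈ Icc 1 r, f i = ∑ i ∈ Icc 1 (j - 1), f i + f j + ∑ i ∈ Icc (j + 1) r, f i := by
  have e : ∀ n, Icc 1 n = Ioc 0 n := fun n => Icc_add_one_left_eq_Ioc 0 n
  rw [e, e, Icc_add_one_left_eq_Ioc, ← sum_Ioc_consecutive f (Nat.zero_le j) h2]
  obtain ⟨k, rfl⟩ : ∃ k, j = k + 1 := ⟨j - 1, by omega⟩
  rw [Nat.add_sub_cancel, sum_Ioc_succ_top (Nat.zero_le k)]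

def nuMin (t : ℕ → ℤ) (a : ℕ → ℕ) (i : ℕ) : ℚ := ((t i : ℚ) - a i + 1) / 2

def nuMax (t : ℕ → ℤ) (a : ℕ → ℕ) (i : ℕ) : ℚ := ((t i : ℚ) + a i - 1) / 2

theorem nuMin_add_nuMax (t : ℕ → ℤ) (a : ℕ → ℕ) (i : ℕ) : nuMin t a i + nuMax t a i = t i := by
  unfold nuMin nuMax
  ring

theorem card_nu (t : ℕ → ℤ) (a : ℕ → ℕ) (i : ℕ) : Multiset.card (nu t a i) = a i := by
  simp [nu]

theorem nuAll_eq_nuLt_add_nu_add_nuGt {t : ℕ → ℤ} {a : ℕ → ℕ} {r j : ℕ} (hj : j ∈ Icc 1 r) :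
    nuAll t a r = nuLt t a j + nu t a j + nuGt t a r j := by
  rw [mem_Icc] at hj
  exact sum_Icc_one_eq_add_add _ hj.1 hj.2

section Parameters

variable {p q r j : ℕ} {t : ℕ → ℤ} {a : ℕ → ℕ} {lam : ℕ → ℤ} {z : ℚ}

local notation "ρ" => ((p : ℚ) + q - 1) / 2

theorem pPrime_le : pPrime p lam ≤ p :=
  (card_filter_le _ _).trans (by simp)

theorem qPrime_le : qPrime p q lam ≤ q :=
  (card_filter_le _ _).trans (by simp)

theorem mem_Pseg_iff :
    z ∈ Pseg p q lam ↔
      (lam p : ℚ) - ρ ≤ z ∧ z ≤ (lam p : ℚ) - ρ + pPrime p lam - 1 ∧ z ≡ ρ [PMOD 1] := by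
  simp only [Pseg, Finset.mem_image, Finset.mem_range]
  exact exists_lt_add_eq_iff (AddCommGroup.modEq_one_iff.2 ⟨p + q - 1 - lam p, by push_cast; ring⟩)

theorem mem_Qseg_iff :
    z ∈ Qseg p q lam ↔
      (lam (p + 1) : ℚ) + ρ - qPrime p q lam + 1 ≤ z ∧ z ≤ (lam (p + 1) : ℚ) + ρ ∧
        z ≡ ρ [PMOD 1] := by
  simp only [Qseg, Finset.mem_image, Finset.mem_range]
  exact exists_lt_sub_eq_iff (AddCommGroup.modEq_one_iff.2 ⟨-lam (p + 1), by push_cast; ring⟩)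

theorem mem_Iseg_of_le_of_le {u v : ℚ} (hu : u ∈ Iseg p q lam) (hv : v ∈ Iseg p q lam)
    (huz : u ≤ z) (hzv : z ≤ v) (hz : z ≡ ρ [PMOD 1]) : z ∈ Iseg p q lam := by
  simp only [Iseg, Finset.mem_inter, mem_Pseg_iff, mem_Qseg_iff] at hu hv ⊢
  refine ⟨⟨?_, ?_, hz⟩, ?_, ?_, hz⟩ <;> linarith

theorem Dominant.nodup_Pms (hdom : Dominant p q lam) : (Pms p q lam).Nodup := by
  have hf := antitoneOn_Icc_of_succ_le hdom.1
  have hanti : StrictAntiOn (fun i : ℕ => (lam i : ℚ) - ρ + (p - i)) (Set.Icc 1 p) :=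
    fun i hi i' hi' hii' => by
      have h1 : (lam i' : ℚ) ≤ lam i := by exact_mod_cast hf hi hi' hii'.le
      have h2 : (i : ℚ) < i' := by exact_mod_cast hii'
      dsimp only
      linarith
  exact (Icc 1 p).nodup.map_on fun i hi i' hi' =>
    hanti.injOn (by simpa using hi) (by simpa using hi')

theorem Dominant.nodup_Qms (hdom : Dominant p q lam) : (Qms p q lam).Nodup := by
  have hf := antitoneOn_Icc_of_succ_le hdom.2
  have hanti : StrictAntiOn (fun i : ℕ => (lam (p + i) : ℚ) + ρ - (i - 1)) (Set.Icc 1 q) :=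
    fun i ⟨hi1, hi2⟩ i' ⟨hi1', hi2'⟩ hii' => by
      have h1 : (lam (p + i') : ℚ) ≤ lam (p + i) := by
        exact_mod_cast hf ⟨by omega, by omega⟩ ⟨by omega, by omega⟩ (by omega)
      have h2 : (i : ℚ) < i' := by exact_mod_cast hii'
      dsimp only
      linarith
  exact (Icc 1 q).nodup.map_on fun i hi i' hi' =>
    hanti.injOn (by simpa using hi) (by simpa using hi')

theorem Dominant.Pseg_subset_Pms (hdom : Dominant p q lam) : (Pseg p q lam).val ⊆ Pms p q lam := by
  intro z hz
  simp only [Pseg, Finset.mem_val, Finset.mem_image, Finset.mem_range] at hz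
  obtain ⟨k, hk, rfl⟩ := hz
  have hkp : k < p := hk.trans_le pPrime_le
  have heq : lam (p - k) = lam p := by
    refine ((antitoneOn_Icc_of_succ_le hdom.1).eq_right_iff_lt_add_card
      ⟨by omega, by omega⟩).2 ?_
    unfold pPrime at hk
    omega
  refine Multiset.mem_map.2 ⟨p - k, by simp only [Finset.mem_val, Finset.mem_Icc]; omega, ?_⟩
  rw [heq, Nat.cast_sub hkp.le]
  ring

theorem Dominant.Qseg_subset_Qms (hdom : Dominant p q lam) : (Qseg p q lam).val ⊆ Qms p q lam := by
  intro z hz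
  simp only [Qseg, Finset.mem_val, Finset.mem_image, Finset.mem_range] at hz
  obtain ⟨k, hk, rfl⟩ := hz
  have hkq : k < q := hk.trans_le qPrime_le
  have heq : lam (p + (k + 1)) = lam (p + 1) := by
    refine ((antitoneOn_Icc_of_succ_le hdom.2).eq_left_iff_lt_add_card
      ⟨by omega, by omega⟩).2 ?_
    unfold qPrime at hk
    omega
  refine Multiset.mem_map.2 ⟨k + 1, by simp only [Finset.mem_val, Finset.mem_Icc]; omega, ?_⟩
  rw [heq]
  push_cast
  ring

theorem Dominant.le_of_mem_Pms (hdom : Dominant p q lam) (hz : z ∈ Pms p q lam) :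
    (lam p : ℚ) - ρ ≤ z := by
  simp only [Pms, Multiset.mem_map, Finset.mem_val, Finset.mem_Icc] at hz
  obtain ⟨i, ⟨hi1, hi2⟩, rfl⟩ := hz
  have h1 : (lam p : ℚ) ≤ lam i := by
    exact_mod_cast antitoneOn_Icc_of_succ_le hdom.1 ⟨hi1, hi2⟩ ⟨hi1.trans hi2, le_rfl⟩ hi2
  have h2 : (i : ℚ) ≤ p := by exact_mod_cast hi2
  linarith

theorem Dominant.sub_qPrime_notMem_Qms (hdom : Dominant p q lam) :
    (lam (p + 1) : ℚ) + ρ - qPrime p q lam ∉ Qms p q lam := by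
  have hf := antitoneOn_Icc_of_succ_le hdom.2
  intro h
  simp only [Qms, Multiset.mem_map, Finset.mem_val, Finset.mem_Icc] at h
  obtain ⟨i, ⟨hi1, hi2⟩, heq⟩ := h
  have hmem : p + i ∈ Set.Icc (p + 1) (p + q) := ⟨by omega, by omega⟩
  have hiff := hf.eq_left_iff_lt_add_card hmem
  unfold qPrime at heq
  rcases le_or_gt i #{ℓ ∈ Icc (p + 1) (p + q) | lam ℓ = lam (p + 1)} with hle | hlt
  · rw [hiff.2 (by omega)] at heq
    have : (i : ℚ) ≤ #{ℓ ∈ Icc (p + 1) (p + q) | lam ℓ = lam (p + 1)} := by exact_mod_cast hle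
    linarith
  · have hne : lam (p + i) ≠ lam (p + 1) := fun h => by have := hiff.1 h; omega
    have h1 : (lam (p + i) : ℚ) + 1 ≤ lam (p + 1) := by
      exact_mod_cast lt_of_le_of_ne (hf ⟨le_rfl, by omega⟩ hmem (by omega)) hne
    have h2 : (#{ℓ ∈ Icc (p + 1) (p + q) | lam ℓ = lam (p + 1)} : ℚ) + 1 ≤ i := by
      exact_mod_cast hlt
    linarith

theorem Dominant.count_nuAll_eq_two_of_mem_Iseg (hdom : Dominant p q lam)
    (hmatch : nuAll t a r = Pms p q lam + Qms p q lam) (hz : z ∈ Iseg p q lam) :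
    Multiset.count z (nuAll t a r) = 2 := by
  obtain ⟨hP, hQ⟩ := Finset.mem_inter.1 hz
  rw [hmatch, Multiset.count_add,
    Multiset.count_eq_one_of_mem hdom.nodup_Pms (hdom.Pseg_subset_Pms hP),
    Multiset.count_eq_one_of_mem hdom.nodup_Qms (hdom.Qseg_subset_Qms hQ)]

theorem Dominant.mem_Pms_and_mem_Qms_of_one_lt_count (hdom : Dominant p q lam)
    (hmatch : nuAll t a r = Pms p q lam + Qms p q lam) (hz : 1 < Multiset.count z (nuAll t a r)) :
    z ∈ Pms p q lam ∧ z ∈ Qms p q lam := by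
  rw [hmatch, Multiset.count_add] at hz
  have hP := Multiset.nodup_iff_count_le_one.1 hdom.nodup_Pms z
  have hQ := Multiset.nodup_iff_count_le_one.1 hdom.nodup_Qms z
  exact ⟨Multiset.count_pos.1 (by omega), Multiset.count_pos.1 (by omega)⟩

theorem LeastJ.mem_Icc (hj : LeastJ p r a j) : j ∈ Icc 1 r :=
  Finset.mem_Icc.2 ⟨hj.h1, hj.hle⟩

theorem GoodParam.sum_add_add_eq (hgp : GoodParam p q r t a) (hj : j ∈ Icc 1 r) :
    ∑ i ∈ Icc 1 (j - 1), a i + a j + ∑ i ∈ Icc (j + 1) r, a i = p + q := by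
  rw [mem_Icc] at hj
  rw [← sum_Icc_one_eq_add_add a hj.1 hj.2, hgp.hsum]

theorem GoodParam.qj_lt (hgp : GoodParam p q r t a) (hj : LeastJ p r a j) : qj q r a j < a j := by
  have hsum := hgp.sum_add_add_eq hj.mem_Icc
  have hlt := hj.hmin (j - 1) (by have := hj.h1; omega)
  have hpos := hgp.hpos j hj.mem_Icc
  unfold qj
  omega

theorem GoodParam.qj_eq_zero_of_le_pj (hgp : GoodParam p q r t a) (hj : LeastJ p r a j)
    (h : a j ≤ pj p a j) : qj q r a j = 0 := by
  have hsum := hgp.sum_add_add_eq hj.mem_Icc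
  have hlt := hj.hmin (j - 1) (by have := hj.h1; omega)
  unfold pj at h
  unfold qj
  omega

theorem GoodParam.nuMin_modEq (hgp : GoodParam p q r t a) {i : ℕ} (hi : i ∈ Icc 1 r) :
    nuMin t a i ≡ ρ [PMOD 1] := by
  obtain ⟨c, hc⟩ := hgp.heven i hi
  have hcQ : (t i : ℚ) + a i + p + q = c + c := by exact_mod_cast hc
  refine AddCommGroup.modEq_one_iff.2 ⟨p + q - 1 - c + a i, ?_⟩
  unfold nuMin
  push_cast
  linarith

theorem GoodParam.nuMax_modEq (hgp : GoodParam p q r t a) {i : ℕ} (hi : i ∈ Icc 1 r) :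
    nuMax t a i ≡ ρ [PMOD 1] :=
  (AddCommGroup.modEq_one_iff.2 ⟨1 - a i, by unfold nuMin nuMax; push_cast; ring⟩).trans
    (hgp.nuMin_modEq hi)

theorem GoodParam.mem_nu_iff (hgp : GoodParam p q r t a) {i : ℕ} (hi : i ∈ Icc 1 r) :
    z ∈ nu t a i ↔ nuMin t a i ≤ z ∧ z ≤ nuMax t a i ∧ z ≡ ρ [PMOD 1] := by
  have e : nuMin t a i + a i - 1 = nuMax t a i := by
    unfold nuMin nuMax
    ring
  rw [← e]
  -- the elaborated `nu` maps over `Multiset.range (a i)` coerced to `Multiset ℚ`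
  simp only [nu, Multiset.pure_def, Multiset.bind_def, Multiset.bind_singleton, Multiset.map_map,
    Function.comp_apply, Multiset.mem_map, Multiset.mem_range]
  exact exists_lt_add_eq_iff (hgp.nuMin_modEq hi)

theorem GoodParam.nu_subset_nu (hgp : GoodParam p q r t a) {i k : ℕ} (hi : i ∈ Icc 1 r)
    (hk : k ∈ Icc 1 r) (hmin : nuMin t a k ≤ nuMin t a i) (hmax : nuMax t a i ≤ nuMax t a k) :
    nu t a i ⊆ nu t a k := fun z hz => by
  obtain ⟨h1, h2, h3⟩ := (hgp.mem_nu_iff hi).1 hz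
  exact (hgp.mem_nu_iff hk).2 ⟨hmin.trans h1, h2.trans hmax, h3⟩

theorem GoodParam.add_one_le_nuMin (hgp : GoodParam p q r t a) {i : ℕ} (hi : i ∈ Icc 1 r)
    {b y : ℚ} (hb : b ≡ ρ [PMOD 1]) (hby : b < y) (hy : y ∈ nu t a i) (hnot : b ∉ nu t a i) :
    b + 1 ≤ nuMin t a i := by
  obtain ⟨-, hy, -⟩ := (hgp.mem_nu_iff hi).1 hy
  refine (hb.trans (hgp.nuMin_modEq hi).symm).add_one_le_of_lt (lt_of_not_ge fun h => ?_)
  exact hnot ((hgp.mem_nu_iff hi).2 ⟨h, by linarith, hb⟩)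

theorem GoodParam.nuMin_le_of_mem_nuLt (hgp : GoodParam p q r t a) (hj : LeastJ p r a j)
    (hcard : Multiset.card ((nu t a j).filter (fun x => x ∈ nuLt t a j)) ≤ qj q r a j)
    {x : ℚ} (hx : x ∈ nuLt t a j) : nuMin t a j ≤ x := by
  by_contra! hlt
  obtain ⟨k, hk, hxk⟩ := Multiset.mem_sum.1 hx
  rw [Finset.mem_Icc] at hk
  have hkr : k ∈ Icc 1 r := Finset.mem_Icc.2 ⟨hk.1, by have := hj.hle; omega⟩
  have htk : (t j : ℚ) ≤ t k := by
    exact_mod_cast antitoneOn_Icc_of_succ_le hgp.hdec ⟨hk.1, by have := hj.hle; omega⟩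
      ⟨hj.h1, hj.hle⟩ (by omega)
  obtain ⟨hxk, -, -⟩ := (hgp.mem_nu_iff hkr).1 hxk
  have := nuMin_add_nuMax t a j
  have := nuMin_add_nuMax t a k
  have hsub := hgp.nu_subset_nu hj.mem_Icc hkr (by linarith) (by linarith)
  have hfull : (nu t a j).filter (fun x => x ∈ nuLt t a j) = nu t a j :=
    Multiset.filter_eq_self.2 fun u hu => Multiset.mem_sum.2 ⟨k, Finset.mem_Icc.2 hk, hsub hu⟩
  rw [hfull, card_nu] at hcard
  exact (hgp.qj_lt hj).not_ge hcard

theorem GoodParam.nu_subset_nuGt (hgp : GoodParam p q r t a) (hj : j ∈ Icc 1 r) {w : ℚ}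
    (hw : w ∈ nuGt t a r j) (hlt : nuMax t a j < w) : nu t a j ⊆ nuGt t a r j := by
  obtain ⟨m, hm, hwm⟩ := Multiset.mem_sum.1 hw
  rw [Finset.mem_Icc] at hm hj
  have hmr : m ∈ Icc 1 r := Finset.mem_Icc.2 ⟨by omega, hm.2⟩
  have htm : (t m : ℚ) ≤ t j := by
    exact_mod_cast antitoneOn_Icc_of_succ_le hgp.hdec hj ⟨by omega, hm.2⟩ (by omega)
  obtain ⟨-, hwm, -⟩ := (hgp.mem_nu_iff hmr).1 hwm
  have := nuMin_add_nuMax t a j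
  have := nuMin_add_nuMax t a m
  have hsub := hgp.nu_subset_nu (Finset.mem_Icc.2 hj) hmr (by linarith) (by linarith)
  exact fun u hu => Multiset.mem_sum.2 ⟨m, Finset.mem_Icc.2 hm, hsub hu⟩

theorem count_nuLt_add_count_nu_add_count_nuGt_eq_two (hdom : Dominant p q lam)
    (hmatch : nuAll t a r = Pms p q lam + Qms p q lam) (hj : j ∈ Icc 1 r)
    (hz : z ∈ Iseg p q lam) :
    Multiset.count z (nuLt t a j) + Multiset.count z (nu t a j) +
      Multiset.count z (nuGt t a r j) = 2 := by
  rw [← Multiset.count_add, ← Multiset.count_add, ← nuAll_eq_nuLt_add_nu_add_nuGt hj]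
  exact hdom.count_nuAll_eq_two_of_mem_Iseg hmatch hz

theorem mem_nuGt_of_mem_Iseg (hdom : Dominant p q lam)
    (hmatch : nuAll t a r = Pms p q lam + Qms p q lam) (hj : j ∈ Icc 1 r)
    (hnd : (nuLt t a j).Nodup) (hz : z ∈ Iseg p q lam) (hzj : z ∉ nu t a j) :
    z ∈ nuGt t a r j := by
  have hcount := count_nuLt_add_count_nu_add_count_nuGt_eq_two hdom hmatch hj hz
  have hle := Multiset.nodup_iff_count_le_one.1 hnd z
  rw [Multiset.count_eq_zero.2 hzj] at hcount
  exact Multiset.count_pos.1 (by omega)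

theorem GoodParam.nuMax_lt_of_mem_Iseg (hgp : GoodParam p q r t a) (hj : LeastJ p r a j)
    (hdom : Dominant p q lam) (hmatch : nuAll t a r = Pms p q lam + Qms p q lam)
    (hcard : Multiset.card ((nu t a j).filter (fun x => x ∈ nuLt t a j)) ≤ qj q r a j)
    {x : ℚ} (hxI : x ∈ Iseg p q lam) (hxLt : x ∈ nuLt t a j) (hxGt : x ∈ nuGt t a r j) :
    nuMax t a j < x := by
  have hxj : x ∉ nu t a j := fun h => by
    have := count_nuLt_add_count_nu_add_count_nuGt_eq_two hdom hmatch hj.mem_Icc hxI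
    have := Multiset.count_pos.2 hxLt
    have := Multiset.count_pos.2 h
    have := Multiset.count_pos.2 hxGt
    omega
  have hx := (mem_Pseg_iff.1 (mem_inter.1 hxI).1).2.2
  exact lt_of_not_ge fun h =>
    hxj ((hgp.mem_nu_iff hj.mem_Icc).2 ⟨hgp.nuMin_le_of_mem_nuLt hj hcard hxLt, h, hx⟩)

theorem GoodParam.nu_subset_nuGt_of_mem_Iseg (hgp : GoodParam p q r t a) (hj : j ∈ Icc 1 r)
    (hdom : Dominant p q lam) (hmatch : nuAll t a r = Pms p q lam + Qms p q lam)
    (hnd : (nuLt t a j).Nodup) {x y : ℚ} (hyI : y ∈ Iseg p q lam) (hyj : y ∈ nu t a j)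
    (hxI : x ∈ Iseg p q lam) (hx : nuMax t a j < x) : nu t a j ⊆ nuGt t a r j := by
  obtain ⟨-, hy, -⟩ := (hgp.mem_nu_iff hj).1 hyj
  have hxg := (mem_Pseg_iff.1 (mem_inter.1 hxI).1).2.2
  have hmax := hgp.nuMax_modEq hj
  have hsuccI : nuMax t a j + 1 ∈ Iseg p q lam :=
    mem_Iseg_of_le_of_le hyI hxI (by linarith) ((hmax.trans hxg.symm).add_one_le_of_lt hx)
      (by simpa using hmax.add_nsmul 1)
  refine hgp.nu_subset_nuGt hj (mem_nuGt_of_mem_Iseg hdom hmatch hj hnd hsuccI fun h => ?_)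
    (lt_add_one _)
  linarith [((hgp.mem_nu_iff hj).1 h).2.1]

theorem GoodParam.nu_subset_Iseg (hgp : GoodParam p q r t a) (hj : j ∈ Icc 1 r)
    (hdom : Dominant p q lam) (hmatch : nuAll t a r = Pms p q lam + Qms p q lam)
    (hsub : nu t a j ⊆ nuGt t a r j) {x y : ℚ} (hyI : y ∈ Iseg p q lam) (hyj : y ∈ nu t a j)
    (hxI : x ∈ Iseg p q lam) (hx : nuMax t a j < x) : ∀ z ∈ nu t a j, z ∈ Iseg p q lam := by
  have hPQ : ∀ w ∈ nu t a j, w ∈ Pms p q lam ∧ w ∈ Qms p q lam := fun w hw => by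
    refine hdom.mem_Pms_and_mem_Qms_of_one_lt_count hmatch ?_
    rw [nuAll_eq_nuLt_add_nu_add_nuGt hj, Multiset.count_add, Multiset.count_add]
    have := Multiset.count_pos.2 hw
    have := Multiset.count_pos.2 (hsub hw)
    omega
  obtain ⟨hy, -, -⟩ := (hgp.mem_nu_iff hj).1 hyj
  obtain ⟨hyP, hyP', -⟩ := mem_Pseg_iff.1 (mem_inter.1 hyI).1
  obtain ⟨hyQ, hyQ', -⟩ := mem_Qseg_iff.1 (mem_inter.1 hyI).2
  have hP : (lam p : ℚ) - ρ - 1 + 1 ≤ nuMin t a j :=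
    hgp.add_one_le_nuMin hj (AddCommGroup.modEq_one_iff.2 ⟨p + q - lam p, by push_cast; ring⟩)
      (by linarith) hyj fun h => by linarith [hdom.le_of_mem_Pms (hPQ _ h).1]
  have hQ : (lam (p + 1) : ℚ) + ρ - qPrime p q lam + 1 ≤ nuMin t a j :=
    hgp.add_one_le_nuMin hj (AddCommGroup.modEq_one_iff.2 ⟨qPrime p q lam - lam (p + 1), by
      push_cast; ring⟩) (by linarith) hyj fun h => hdom.sub_qPrime_notMem_Qms (hPQ _ h).2
  have hmin : nuMin t a j ∈ Iseg p q lam :=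
    mem_inter.2 ⟨mem_Pseg_iff.2 ⟨by linarith, by linarith, hgp.nuMin_modEq hj⟩,
      mem_Qseg_iff.2 ⟨hQ, by linarith, hgp.nuMin_modEq hj⟩⟩
  intro z hz
  obtain ⟨hz1, hz2, hz3⟩ := (hgp.mem_nu_iff hj).1 hz
  exact mem_Iseg_of_le_of_le hmin hxI hz1 (by linarith) hz3

end Parameters

theorem statement7_general (p q r j : ℕ) (t : ℕ → ℤ) (a : ℕ → ℕ)
    (hgp : GoodParam p q r t a) (hj : LeastJ p r a j)
    (hnv : NonVanishing p q r t a j)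
    (lam : ℕ → ℤ) (hdom : Dominant p q lam)
    (hmatch : nuAll t a r = Pms p q lam + Qms p q lam)
    (h1 : ∃ x ∈ Iseg p q lam, x ∈ nuLt t a j ∧ x ∈ nuGt t a r j)
    (h2 : ∃ x ∈ Iseg p q lam, x ∈ nu t a j) :
    (∀ x ∈ nu t a j, x ∈ Iseg p q lam) ∧
    (∀ x ∈ Iseg p q lam, x ∈ nuGt t a r j) ∧
    qj q r a j = 0 := by
  obtain ⟨x, hxI, hxLt, hxGt⟩ := h1
  obtain ⟨y, hyI, hyj⟩ := h2
  obtain ⟨hndLt, -, hcardLt, hcardGt⟩ := hnv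
  have hjr := hj.mem_Icc
  have hx := hgp.nuMax_lt_of_mem_Iseg hj hdom hmatch hcardLt hxI hxLt hxGt
  have hsub := hgp.nu_subset_nuGt_of_mem_Iseg hjr hdom hmatch hndLt hyI hyj hxI hx
  have hfull : (nu t a j).filter (fun x => x ∈ nuGt t a r j) = nu t a j :=
    Multiset.filter_eq_self.2 fun _ hu => hsub hu
  refine ⟨hgp.nu_subset_Iseg hjr hdom hmatch hsub hyI hyj hxI hx, fun z hz => ?_,
    hgp.qj_eq_zero_of_le_pj hj ?_⟩
  · by_cases hzj : z ∈ nu t a j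
    exacts [hsub hzj, mem_nuGt_of_mem_Iseg hdom hmatch hjr hndLt hz hzj]
  · rwa [hfull, card_nu] at hcardGt

/-- if some element of `I` occurs in both `ν_{<j}` and `ν_{>j}`, and
`I ∩ ν_j ≠ ∅`, then `ν_j ⊆ I`, `I ⊆ ν_{>j}` and `q_j = 0`. -/
theorem statement7 (p q r j : ℕ) (hp : 1 ≤ p) (hq : 1 ≤ q) (t : ℕ → ℤ) (a : ℕ → ℕ)
    (hgp : GoodParam p q r t a) (hj : LeastJ p r a j)
    (hnv : NonVanishing p q r t a j)
    (lam : ℕ → ℤ) (hdom : Dominant p q lam)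
    (hmatch : nuAll t a r = Pms p q lam + Qms p q lam)
    (h1 : ∃ x ∈ Iseg p q lam, x ∈ nuLt t a j ∧ x ∈ nuGt t a r j)
    (h2 : ∃ x ∈ Iseg p q lam, x ∈ nu t a j) :
    (∀ x ∈ nu t a j, x ∈ Iseg p q lam) ∧
    (∀ x ∈ Iseg p q lam, x ∈ nuGt t a r j) ∧
    qj q r a j = 0 :=
  statement7_general p q r j t a hgp hj hnv lam hdom hmatch h1 h2
end

section
/- Let p, q ≥ 1, N = p + q, let (t_i, a_i)_{i=1}^r be a good parameter such that ν_{<j} and ν_{>j} are multiplicity-free, and let λ ∈ ℤ^N be dominant, satisfying the matching condition ν = P ⊔ Q. If no element of I occurs in both ν_{<j} and ν_{>j}, then I ⊆ ν_j. -/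
open Finset

lemma lam_anti_P (p q : ℕ) (lam : ℕ → ℤ) (hdom : Dominant p q lam) :
    ∀ i i', 1 ≤ i → i ≤ i' → i' ≤ p → lam i' ≤ lam i := by
  intro i i' h1 hle hp'
  induction i' with
  | zero => omega
  | succ n ih =>
    rcases Nat.eq_or_lt_of_le hle with h | h
    · exact le_of_eq (by rw [h])
    · have hn : i ≤ n := by omega
      exact le_trans (hdom.1 n (by omega) (by omega)) (ih hn (by omega))

lemma lam_anti_Q (p q : ℕ) (lam : ℕ → ℤ) (hdom : Dominant p q lam) :
    ∀ i i', p + 1 ≤ i → i ≤ i' → i' ≤ p + q → lam i' ≤ lam i := by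
  intro i i' h1 hle hp'
  induction i' with
  | zero => omega
  | succ n ih =>
    rcases Nat.eq_or_lt_of_le hle with h | h
    · exact le_of_eq (by rw [h])
    · have hn : i ≤ n := by omega
      exact le_trans (hdom.2 n (by omega) (by omega)) (ih hn (by omega))

lemma lam_eq_P (p q : ℕ) (lam : ℕ → ℤ) (hp : 1 ≤ p) (hdom : Dominant p q lam)
    {k : ℕ} (hk : k < pPrime p lam) : k < p ∧ lam (p - k) = lam p := by
  have hcard : pPrime p lam ≤ p := by
    have := Finset.card_filter_le (Finset.Icc 1 p) (fun i => lam i = lam p)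
    simpa [pPrime, Nat.card_Icc] using this
  have hkp : k < p := lt_of_lt_of_le hk hcard
  refine ⟨hkp, ?_⟩
  have hge : lam p ≤ lam (p - k) := lam_anti_P p q lam hdom (p - k) p (by omega) (by omega) le_rfl
  by_contra hne
  have hlt : lam p < lam (p - k) := lt_of_le_of_ne hge (fun h => hne h.symm)
  have hsub : ((Finset.Icc 1 p).filter (fun i => lam i = lam p)) ⊆ Finset.Icc (p - k + 1) p := by
    intro i hi
    rw [Finset.mem_filter, Finset.mem_Icc] at hi
    rw [Finset.mem_Icc]
    refine ⟨?_, hi.1.2⟩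
    by_contra hcon
    have hile : i ≤ p - k := by omega
    have := lam_anti_P p q lam hdom i (p - k) hi.1.1 hile (by omega)
    omega
  have := Finset.card_le_card hsub
  rw [Nat.card_Icc] at this
  have : pPrime p lam ≤ k := by unfold pPrime; omega
  omega

lemma lam_eq_Q (p q : ℕ) (lam : ℕ → ℤ) (hq : 1 ≤ q) (hdom : Dominant p q lam)
    {k : ℕ} (hk : k < qPrime p q lam) : k < q ∧ lam (p + 1 + k) = lam (p + 1) := by
  have hcard : qPrime p q lam ≤ q := by
    have := Finset.card_filter_le (Finset.Icc (p + 1) (p + q)) (fun i => lam i = lam (p + 1))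
    simpa [qPrime, Nat.card_Icc] using this
  have hkq : k < q := lt_of_lt_of_le hk hcard
  refine ⟨hkq, ?_⟩
  have hge : lam (p + 1 + k) ≤ lam (p + 1) :=
    lam_anti_Q p q lam hdom (p + 1) (p + 1 + k) le_rfl (by omega) (by omega)
  by_contra hne
  have hlt : lam (p + 1 + k) < lam (p + 1) := lt_of_le_of_ne hge hne
  have hsub : ((Finset.Icc (p + 1) (p + q)).filter (fun i => lam i = lam (p + 1)))
      ⊆ Finset.Icc (p + 1) (p + k) := by
    intro i hi
    rw [Finset.mem_filter, Finset.mem_Icc] at hi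
    rw [Finset.mem_Icc]
    refine ⟨hi.1.1, ?_⟩
    by_contra hcon
    have hile : p + 1 + k ≤ i := by omega
    have := lam_anti_Q p q lam hdom (p + 1 + k) i (by omega) hile hi.1.2
    omega
  have := Finset.card_le_card hsub
  rw [Nat.card_Icc] at this
  have : qPrime p q lam ≤ k := by unfold qPrime; omega
  omega

lemma Pseg_mem_Pms (p q : ℕ) (lam : ℕ → ℤ) (hp : 1 ≤ p) (hdom : Dominant p q lam)
    {x : ℚ} (hx : x ∈ Pseg p q lam) : x ∈ Pms p q lam := by
  rw [Pseg, Finset.mem_image] at hx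
  obtain ⟨k, hk, hxe⟩ := hx
  rw [Finset.mem_range] at hk
  obtain ⟨hkp, heq⟩ := lam_eq_P p q lam hp hdom hk
  rw [Pms, Multiset.mem_map]
  refine ⟨p - k, ?_, ?_⟩
  · rw [Finset.mem_val, Finset.mem_Icc]; omega
  · rw [heq, ← hxe]
    have h1 : ((p - k : ℕ) : ℚ) = (p : ℚ) - (k : ℚ) := by
      push_cast [Nat.cast_sub (le_of_lt hkp)]; ring
    rw [h1]; ring

lemma Qseg_mem_Qms (p q : ℕ) (lam : ℕ → ℤ) (hq : 1 ≤ q) (hdom : Dominant p q lam)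
    {x : ℚ} (hx : x ∈ Qseg p q lam) : x ∈ Qms p q lam := by
  rw [Qseg, Finset.mem_image] at hx
  obtain ⟨k, hk, hxe⟩ := hx
  rw [Finset.mem_range] at hk
  obtain ⟨hkq, heq⟩ := lam_eq_Q p q lam hq hdom hk
  rw [Qms, Multiset.mem_map]
  refine ⟨k + 1, ?_, ?_⟩
  · rw [Finset.mem_val, Finset.mem_Icc]; omega
  · have : p + (k + 1) = p + 1 + k := by omega
    rw [this, heq, ← hxe]
    push_cast; ring

/-- if `ν_{<j}` and `ν_{>j}` are multiplicity free and no element of `I`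
occurs in both `ν_{<j}` and `ν_{>j}`, then `I ⊆ ν_j`. -/
theorem statement8 (p q r j : ℕ) (hp : 1 ≤ p) (hq : 1 ≤ q) (t : ℕ → ℤ) (a : ℕ → ℕ)
    (hgp : GoodParam p q r t a) (hj : LeastJ p r a j)
    (hltnd : (nuLt t a j).Nodup) (hgtnd : (nuGt t a r j).Nodup)
    (lam : ℕ → ℤ) (hdom : Dominant p q lam)
    (hmatch : nuAll t a r = Pms p q lam + Qms p q lam)
    (hno : ¬ ∃ x ∈ Iseg p q lam, x ∈ nuLt t a j ∧ x ∈ nuGt t a r j) :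
    ∀ x ∈ Iseg p q lam, x ∈ nu t a j := by
  intro x hx
  rw [Iseg, Finset.mem_inter] at hx
  have memP : x ∈ Pms p q lam := Pseg_mem_Pms p q lam hp hdom hx.1
  have memQ : x ∈ Qms p q lam := Qseg_mem_Qms p q lam hq hdom hx.2
  have hsplit : nuAll t a r = nuLt t a j + nu t a j + nuGt t a r j := by
    have h1 : Finset.Icc 1 r = Finset.Icc 1 (j - 1) ∪ Finset.Icc j r := by
      ext i
      simp only [Finset.mem_Icc, Finset.mem_union]
      have := hj.h1; have := hj.hle
      omega
    have hdisj : Disjoint (Finset.Icc 1 (j - 1)) (Finset.Icc j r) := by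
      rw [Finset.disjoint_left]
      intro i hi hi'
      rw [Finset.mem_Icc] at hi hi'
      have := hj.h1; omega
    have h2 : Finset.Icc j r = insert j (Finset.Icc (j + 1) r) := by
      ext i
      simp only [Finset.mem_Icc, Finset.mem_insert]
      have := hj.hle; omega
    rw [nuAll, h1, Finset.sum_union hdisj, h2,
      Finset.sum_insert (by simp [Finset.mem_Icc])]
    rw [nuLt, nuGt, add_assoc]
  have hcount : Multiset.count x (nuAll t a r) =
      Multiset.count x (nuLt t a j) + Multiset.count x (nu t a j)
        + Multiset.count x (nuGt t a r j) := by
    rw [hsplit, Multiset.count_add, Multiset.count_add]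
  have h2le : 2 ≤ Multiset.count x (nuAll t a r) := by
    rw [hmatch, Multiset.count_add]
    have h1 := Multiset.one_le_count_iff_mem.mpr memP
    have h2 := Multiset.one_le_count_iff_mem.mpr memQ
    omega
  have hlt1 : Multiset.count x (nuLt t a j) ≤ 1 :=
    Multiset.nodup_iff_count_le_one.mp hltnd x
  have hgt1 : Multiset.count x (nuGt t a r j) ≤ 1 :=
    Multiset.nodup_iff_count_le_one.mp hgtnd x
  have hnotboth : Multiset.count x (nuLt t a j) + Multiset.count x (nuGt t a r j) ≤ 1 := by
    by_cases hmem : x ∈ nuLt t a j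
    · have hng : x ∉ nuGt t a r j := by
        intro hg
        exact hno ⟨x, by rw [Iseg, Finset.mem_inter]; exact hx, hmem, hg⟩
      rw [Multiset.count_eq_zero.mpr hng]
      omega
    · rw [Multiset.count_eq_zero.mpr hmem]
      omega
  have : 1 ≤ Multiset.count x (nu t a j) := by omega
  exact Multiset.one_le_count_iff_mem.mp this
end

section
/- Let p ≥ 1, q ≥ 0, N = p + q, and let (t_i, a_i)_{i=1}^r be a good parameter satisfying the nonvanishing condition. Then every element of the multiset ν_{<j} is greater than or equal to min ν_j; and if moreover q_j ≥ 1, then every element of the multiset ν_{>j} is less than or equal to max ν_j. -/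
open Finset

lemma my_mem_nu {t : ℕ → ℤ} {a : ℕ → ℕ} {i : ℕ} {x : ℚ} :
    x ∈ nu t a i ↔ ∃ m : ℕ, m < a i ∧ x = ((t i : ℚ) - (a i : ℚ) + 1) / 2 + (m : ℚ) := by
  constructor
  · intro h
    simp [nu] at h
    obtain ⟨m, hm, h2⟩ := h
    exact ⟨m, hm, h2.symm⟩
  · rintro ⟨m, hm, rfl⟩
    simp [nu]
    exact hm

lemma my_t_mono (r : ℕ) (t : ℕ → ℤ) (hdec : ∀ i, 1 ≤ i → i < r → t (i + 1) ≤ t i) :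
    ∀ k l, 1 ≤ k → k ≤ l → l ≤ r → t l ≤ t k := by
  intro k l hk
  induction l with
  | zero => intro h1 _; exact absurd h1 (by omega)
  | succ n ih =>
    intro hkl hlr
    rcases Nat.lt_or_ge k (n + 1) with h | h
    · exact le_trans (hdec n (by omega) (by omega)) (ih (by omega) (by omega))
    · have hk' : k = n + 1 := by omega
      rw [hk']

lemma my_nu_subset {t : ℕ → ℤ} {a : ℕ → ℕ} {j k : ℕ}
    (h1 : t k - (a k : ℤ) ≤ t j - (a j : ℤ))
    (h2 : t j + (a j : ℤ) ≤ t k + (a k : ℤ))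
    (hpar : ∃ e : ℤ, t j - (a j : ℤ) - (t k - (a k : ℤ)) = e + e) :
    ∀ y ∈ nu t a j, y ∈ nu t a k := by
  intro y hy
  rw [my_mem_nu] at hy ⊢
  obtain ⟨m, hm, rfl⟩ := hy
  obtain ⟨e, he⟩ := hpar
  have he0 : 0 ≤ e := by omega
  refine ⟨m + e.toNat, by omega, ?_⟩
  have hkey : (t k : ℤ) - (a k : ℤ) + 2 * ((m : ℤ) + e.toNat) = t j - (a j : ℤ) + 2 * m := by
    omega
  have hkeyQ : (t k : ℚ) - (a k : ℚ) + 2 * ((m : ℚ) + (e.toNat : ℚ))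
      = (t j : ℚ) - (a j : ℚ) + 2 * (m : ℚ) := by exact_mod_cast hkey
  push_cast
  linarith

lemma my_sum_split (r j : ℕ) (a : ℕ → ℕ) (hj1 : 1 ≤ j) (hjr : j ≤ r) :
    ∑ i ∈ Finset.Icc 1 r, a i
      = (∑ i ∈ Finset.Icc 1 (j - 1), a i) + a j + ∑ i ∈ Finset.Icc (j + 1) r, a i := by
  have e1 : Finset.Icc 1 r = Finset.Ioc 0 r := by ext x; simp; omega
  have e2 : Finset.Icc 1 (j - 1) = Finset.Ioc 0 (j - 1) := by ext x; simp; omega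
  have e3 : Finset.Icc (j + 1) r = Finset.Ioc j r := by ext x; simp
  have e4 : Finset.Ioc (j - 1) j = {j} := by ext x; simp; omega
  rw [e1, e2, e3, ← Finset.sum_Ioc_consecutive (f := a) (Nat.zero_le (j - 1)) (by omega : j - 1 ≤ r),
    ← Finset.sum_Ioc_consecutive (f := a) (by omega : j - 1 ≤ j) hjr, e4, Finset.sum_singleton]
  ring

/-- every element of `ν_{<j}` is `≥ min ν_j = (t_j − a_j + 1)/2`; and if
`q_j ≥ 1`, every element of `ν_{>j}` is `≤ max ν_j = (t_j + a_j − 1)/2`. -/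
theorem statement10 (p q r j : ℕ) (hp : 1 ≤ p) (t : ℕ → ℤ) (a : ℕ → ℕ)
    (hgp : GoodParam p q r t a) (hj : LeastJ p r a j)
    (hnv : NonVanishing p q r t a j) :
    (∀ x ∈ nuLt t a j, ((t j : ℚ) - (a j : ℚ) + 1) / 2 ≤ x) ∧
    (1 ≤ qj q r a j → ∀ x ∈ nuGt t a r j, x ≤ ((t j : ℚ) + (a j : ℚ) - 1) / 2) := by
  obtain ⟨hr, hpos, hsum, heven, hdec, hadec⟩ := hgp
  obtain ⟨hj1, hjr, hge, hmin⟩ := hj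
  obtain ⟨hnd1, hnd2, hqle, hple⟩ := hnv
  have hmono := my_t_mono r t hdec
  -- arithmetic of the sums
  have hT : ∑ i ∈ Finset.Icc 1 (j - 1), a i < p := hmin (j - 1) (by omega)
  have hsplit := my_sum_split r j a hj1 hjr
  have hsplit2 := my_sum_split j j a hj1 le_rfl
  have hempty : Finset.Icc (j + 1) j = (∅ : Finset ℕ) := Finset.Icc_eq_empty (by omega)
  rw [hempty, Finset.sum_empty] at hsplit2
  have hS : ∑ i ∈ Finset.Icc (j + 1) r, a i ≤ q := by omega
  -- parity of min-differences
  have hparity : ∀ k, 1 ≤ k → k ≤ r →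
      ∃ e : ℤ, t j - (a j : ℤ) - (t k - (a k : ℤ)) = e + e := by
    intro k hk1 hkr
    obtain ⟨c1, hc1⟩ := heven j (Finset.mem_Icc.mpr ⟨hj1, hjr⟩)
    obtain ⟨c2, hc2⟩ := heven k (Finset.mem_Icc.mpr ⟨hk1, hkr⟩)
    exact ⟨c1 - c2 - (a j : ℤ) + (a k : ℤ), by omega⟩
  have cardnu : Multiset.card (nu t a j) = a j := by
    simp [nu]
  constructor
  · -- part 1
    intro x hx
    rw [nuLt, Multiset.mem_sum] at hx
    obtain ⟨k, hk, hxk⟩ := hx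
    rw [Finset.mem_Icc] at hk
    by_cases hcase : t j - (a j : ℤ) ≤ t k - (a k : ℤ)
    · obtain ⟨m, hm, rfl⟩ := my_mem_nu.mp hxk
      have h1 : (t j : ℚ) - (a j : ℚ) ≤ (t k : ℚ) - (a k : ℚ) := by exact_mod_cast hcase
      have h2 : (0 : ℚ) ≤ (m : ℚ) := Nat.cast_nonneg m
      linarith
    · exfalso
      push_neg at hcase
      have hkr : k ≤ r := by omega
      have htk : t j ≤ t k := hmono k j (by omega) (by omega) hjr
      obtain ⟨e, he⟩ := hparity k (by omega) hkr
      have hsub := my_nu_subset (j := j) (k := k) (le_of_lt hcase) (by omega) ⟨e, he⟩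
      have hfil : (nu t a j).filter (fun x => x ∈ nuLt t a j) = nu t a j := by
        apply Multiset.filter_eq_self.mpr
        intro y hy
        rw [nuLt, Multiset.mem_sum]
        exact ⟨k, Finset.mem_Icc.mpr ⟨by omega, by omega⟩, hsub y hy⟩
      rw [hfil, cardnu] at hqle
      simp only [qj] at hqle
      omega
  · -- part 2
    intro hq1 x hx
    rw [nuGt, Multiset.mem_sum] at hx
    obtain ⟨k, hk, hxk⟩ := hx
    rw [Finset.mem_Icc] at hk
    by_cases hcase : t k + (a k : ℤ) ≤ t j + (a j : ℤ)
    · obtain ⟨m, hm, rfl⟩ := my_mem_nu.mp hxk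
      have h1 : (t k : ℚ) + (a k : ℚ) ≤ (t j : ℚ) + (a j : ℚ) := by exact_mod_cast hcase
      have hmZ : (m : ℤ) ≤ (a k : ℤ) - 1 := by omega
      have h2 : (m : ℚ) ≤ (a k : ℚ) - 1 := by exact_mod_cast hmZ
      linarith
    · exfalso
      push_neg at hcase
      have htk : t k ≤ t j := hmono j k hj1 (by omega) (by omega)
      obtain ⟨e, he⟩ := hparity k (by omega) (by omega)
      have hsub := my_nu_subset (j := j) (k := k) (by omega) (le_of_lt hcase) ⟨e, he⟩
      have hfil : (nu t a j).filter (fun x => x ∈ nuGt t a r j) = nu t a j := by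
        apply Multiset.filter_eq_self.mpr
        intro y hy
        rw [nuGt, Multiset.mem_sum]
        exact ⟨k, Finset.mem_Icc.mpr ⟨by omega, by omega⟩, hsub y hy⟩
      rw [hfil, cardnu] at hple
      simp only [pj] at hple
      simp only [qj] at hq1
      omega
end

section
/- Let p ≥ 1, q ≥ 0, N = p + q, and let (t_i, a_i)_{i=1}^r be a good parameter satisfying the nonvanishing condition. Then the set {x ∈ ν_{>j} : x > max ν_j} is either empty or equal to the full segment {max ν_j + 1, max ν_j + 2, …, M}, where M = max ν_{>j}; moreover, if it is nonempty, then every element of ν_j belongs to ν_{>j} and q_j = 0. -/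
open Finset

lemma mem_nu_iff (t : ℕ → ℤ) (a : ℕ → ℕ) (i : ℕ) (x : ℚ) :
    x ∈ nu t a i ↔ ∃ k : ℕ, k < a i ∧ x = ((t i : ℚ) - (a i : ℚ) + 1) / 2 + (k : ℚ) := by
  simp only [nu, Multiset.mem_map, Multiset.mem_bind, Multiset.mem_range]
  simp [nu]
  constructor
  · rintro ⟨k, hk, he⟩
    exact ⟨k, hk, he.symm⟩
  · rintro ⟨k, hk, he⟩
    exact ⟨k, hk, he.symm⟩

lemma mem_nuGt_iff (t : ℕ → ℤ) (a : ℕ → ℕ) (r j : ℕ) (x : ℚ) :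
    x ∈ nuGt t a r j ↔ ∃ ℓ ∈ Finset.Icc (j+1) r, x ∈ nu t a ℓ := by
  simp only [nuGt]
  exact Multiset.mem_sum

lemma t_anti {r : ℕ} {t : ℕ → ℤ} (hdec : ∀ i, 1 ≤ i → i < r → t (i + 1) ≤ t i) :
    ∀ i ℓ, 1 ≤ i → i ≤ ℓ → ℓ ≤ r → t ℓ ≤ t i := by
  intro i ℓ h1 h2 h3
  induction ℓ, h2 using Nat.le_induction with
  | base => exact le_refl _
  | succ n hn ih =>
      exact le_trans (hdec n (le_trans h1 hn) (by omega)) (ih (by omega))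

/-- the set `{x ∈ ν_{>j} : x > max ν_j}` is either empty, or equal to the
full segment `{max ν_j + 1, …, M}` where `M = max ν_{>j}`; and if nonempty then
`ν_j ⊆ ν_{>j}` and `q_j = 0`. -/
theorem statement11 (p q r j : ℕ) (hp : 1 ≤ p) (t : ℕ → ℤ) (a : ℕ → ℕ)
    (hgp : GoodParam p q r t a) (hj : LeastJ p r a j)
    (hnv : NonVanishing p q r t a j) :
    (nuGt t a r j).filter (fun x => ((t j : ℚ) + (a j : ℚ) - 1) / 2 < x) = 0 ∨
    (∃ M : ℚ, M ∈ nuGt t a r j ∧ (∀ y ∈ nuGt t a r j, y ≤ M) ∧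
      (∀ x : ℚ,
        x ∈ (nuGt t a r j).filter (fun y => ((t j : ℚ) + (a j : ℚ) - 1) / 2 < y) ↔
        ∃ k : ℕ, 1 ≤ k ∧ ((t j : ℚ) + (a j : ℚ) - 1) / 2 + (k : ℚ) ≤ M ∧
          x = ((t j : ℚ) + (a j : ℚ) - 1) / 2 + (k : ℚ)) ∧
      (∀ y ∈ nu t a j, y ∈ nuGt t a r j) ∧ qj q r a j = 0) := by
  by_cases h0 : (nuGt t a r j).filter (fun x => ((t j : ℚ) + (a j : ℚ) - 1) / 2 < x) = 0
  · exact Or.inl h0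
  right
  set D : ℚ := ((t j : ℚ) + (a j : ℚ) - 1) / 2 with hD
  set c : ℕ → ℚ := fun i => ((t i : ℚ) - (a i : ℚ) + 1) / 2 with hc
  have hjI : j ∈ Finset.Icc 1 r := Finset.mem_Icc.mpr ⟨hj.h1, hj.hle⟩
  have haj : 0 < a j := hgp.hpos j hjI
  have hcjD : c j + ((a j : ℚ) - 1) = D := by
    simp only [hc, hD]; ring
  have hcled : c j ≤ D := by
    have : (1:ℚ) ≤ (a j : ℚ) := by exact_mod_cast haj
    linarith [hcjD]
  -- parity: offset between segment minima is an integer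
  have hpar : ∀ ℓ ∈ Finset.Icc (j+1) r, ∃ w : ℤ, c ℓ = c j + (w : ℚ) := by
    intro ℓ hℓ
    rw [Finset.mem_Icc] at hℓ
    have hℓI : ℓ ∈ Finset.Icc 1 r := Finset.mem_Icc.mpr ⟨by omega, hℓ.2⟩
    obtain ⟨u, hu⟩ := hgp.heven ℓ hℓI
    obtain ⟨v, hv⟩ := hgp.heven j hjI
    refine ⟨u - (a ℓ : ℤ) - v + (a j : ℤ), ?_⟩
    have hz : (t ℓ - (a ℓ : ℤ)) - (t j - (a j : ℤ)) =
        2 * (u - (a ℓ : ℤ) - v + (a j : ℤ)) := by omega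
    have hq : ((t ℓ : ℚ) - (a ℓ : ℚ)) - ((t j : ℚ) - (a j : ℚ)) =
        2 * ((u : ℚ) - (a ℓ : ℚ) - (v : ℚ) + (a j : ℚ)) := by exact_mod_cast hz
    simp only [hc]
    push_cast
    linarith
  -- key claim
  have key : ∀ ℓ ∈ Finset.Icc (j+1) r, ∀ x ∈ nu t a ℓ, D < x →
      ∀ y : ℚ, (∃ n : ℤ, y = c j + (n : ℚ)) → c j ≤ y → y ≤ x → y ∈ nu t a ℓ := by
    intro ℓ hℓ x hx hDx y ⟨n, hn⟩ hcy hyx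
    obtain ⟨w, hw⟩ := hpar ℓ hℓ
    rw [Finset.mem_Icc] at hℓ
    obtain ⟨kx, hkx, hxe⟩ := (mem_nu_iff t a ℓ x).mp hx
    have htle : t ℓ ≤ t j := t_anti hgp.hdec j ℓ hj.h1 (by omega) hℓ.2
    -- x ≤ c ℓ + a ℓ - 1
    have hxub : x ≤ c ℓ + ((a ℓ : ℚ) - 1) := by
      rw [hxe]; simp only [hc]
      have : (kx : ℚ) ≤ (a ℓ : ℚ) - 1 := by
        have : (kx : ℚ) + 1 ≤ (a ℓ : ℚ) := by exact_mod_cast hkx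
        linarith
      linarith
    -- D < x forces t j + a j < t ℓ + a ℓ, then c ℓ < c j, so w < 0
    have hsum : (t j : ℚ) + (a j : ℚ) < (t ℓ : ℚ) + (a ℓ : ℚ) := by
      have := lt_of_lt_of_le hDx hxub
      simp only [hD, hc] at this
      linarith
    have hclt : c ℓ < c j := by
      simp only [hc]
      have htq : (t ℓ : ℚ) ≤ (t j : ℚ) := by exact_mod_cast htle
      linarith
    have hwneg : (w : ℚ) < 0 := by rw [hw] at hclt; linarith
    -- y = c ℓ + (n - w), with 0 ≤ n - w < a ℓ
    have hylb : 0 < (n : ℚ) - (w : ℚ) := by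
      have : c ℓ ≤ c j := le_of_lt hclt
      have h1 : (0:ℚ) ≤ (n : ℚ) := by
        have := hcy; rw [hn] at this; linarith
      linarith
    have hyub : (n : ℚ) - (w : ℚ) ≤ (a ℓ : ℚ) - 1 := by
      have : y ≤ c ℓ + ((a ℓ : ℚ) - 1) := le_trans hyx hxub
      rw [hn, hw] at this
      linarith
    have hnwZ : 0 < n - w := by exact_mod_cast hylb
    have hnwZ2 : n - w ≤ (a ℓ : ℤ) - 1 := by exact_mod_cast hyub
    refine (mem_nu_iff t a ℓ y).mpr ⟨(n - w).toNat, by omega, ?_⟩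
    have htn : ((n - w).toNat : ℚ) = (n : ℚ) - (w : ℚ) := by
      have h' : ((n - w).toNat : ℤ) = n - w := Int.toNat_of_nonneg (by omega)
      exact_mod_cast h'
    have hcl : ((t ℓ : ℚ) - (a ℓ : ℚ) + 1) / 2 = c ℓ := rfl
    rw [hn, htn, hcl, hw]; ring
  -- extract x0
  obtain ⟨x0, hx0⟩ := Multiset.exists_mem_of_ne_zero h0
  rw [Multiset.mem_filter] at hx0
  obtain ⟨hx0g, hx0D⟩ := hx0
  obtain ⟨ℓ0, hℓ0I, hx0ℓ⟩ := (mem_nuGt_iff t a r j x0).mp hx0g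
  -- ν_j ⊆ ν_{>j}
  have hsub : ∀ y ∈ nu t a j, y ∈ nuGt t a r j := by
    intro y hy
    obtain ⟨k, hk, hye⟩ := (mem_nu_iff t a j y).mp hy
    have h1 : c j ≤ y := by
      rw [hye]; simp only [hc]
      have : (0:ℚ) ≤ (k : ℚ) := by positivity
      linarith
    have h2 : y ≤ D := by
      rw [hye, ← hcjD]; simp only [hc]
      have : (k : ℚ) ≤ (a j : ℚ) - 1 := by
        have : (k : ℚ) + 1 ≤ (a j : ℚ) := by exact_mod_cast hk
        linarith
      linarith
    exact (mem_nuGt_iff t a r j y).mpr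
      ⟨ℓ0, hℓ0I, key ℓ0 hℓ0I x0 hx0ℓ hx0D y
        ⟨(k : ℤ), by
          rw [hye]
          have hcl : ((t j : ℚ) - (a j : ℚ) + 1) / 2 = c j := rfl
          rw [hcl]; push_cast; ring⟩
        h1 (le_trans h2 (le_of_lt hx0D))⟩
  -- card of filter = a j, so a j ≤ pj
  have hfe : (nu t a j).filter (fun x => x ∈ nuGt t a r j) = nu t a j :=
    Multiset.filter_eq_self.mpr hsub
  have hcard : Multiset.card ((nu t a j).filter (fun x => x ∈ nuGt t a r j)) = a j := by
    rw [hfe]; simp [nu]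
  have hajpj : a j ≤ pj p a j := by rw [← hcard]; exact hnv.2.2.2
  -- arithmetic: p = S_{j-1} + a j, then q_j = 0
  have hj1 := hj.h1
  obtain ⟨j', rfl⟩ : ∃ j', j = j' + 1 := ⟨j - 1, by omega⟩
  have hsplit1 : ∑ i ∈ Finset.Icc 1 (j'+1), a i = ∑ i ∈ Finset.Icc 1 j', a i + a (j'+1) :=
    Finset.sum_Icc_succ_top (by omega) a
  have hmin' : ∑ i ∈ Finset.Icc 1 j', a i < p := hj.hmin j' (by omega)
  have hge' := hj.hge
  have hpjv : pj p a (j'+1) = p - ∑ i ∈ Finset.Icc 1 j', a i := by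
    simp only [pj, Nat.add_sub_cancel]
  have hpeq : p = ∑ i ∈ Finset.Icc 1 j', a i + a (j'+1) := by
    rw [hpjv] at hajpj; omega
  have hsplit2 : ∑ i ∈ Finset.Icc 1 (j'+1), a i + ∑ i ∈ Finset.Icc (j'+1+1) r, a i
      = ∑ i ∈ Finset.Icc 1 r, a i := by
    have e1 : Finset.Icc (j'+1+1) r = Finset.Ioc (j'+1) r := by
      ext x; simp [Finset.mem_Icc, Finset.mem_Ioc]
    have e2 : Finset.Icc 1 (j'+1) = Finset.Ioc 0 (j'+1) := by
      ext x; simp [Finset.mem_Icc, Finset.mem_Ioc]; omega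
    have e3 : Finset.Icc 1 r = Finset.Ioc 0 r := by
      ext x; simp [Finset.mem_Icc, Finset.mem_Ioc]; omega
    rw [e1, e2, e3, Finset.sum_Ioc_consecutive a (by omega) hj.hle]
  have hqj : qj q r a (j'+1) = 0 := by
    have hs := hgp.hsum
    simp only [qj]
    omega
  -- the maximum M
  have hne : (nuGt t a r (j'+1)).toFinset.Nonempty := ⟨x0, Multiset.mem_toFinset.mpr hx0g⟩
  set M := (nuGt t a r (j'+1)).toFinset.max' hne with hM
  have hMmem : M ∈ nuGt t a r (j'+1) :=
    Multiset.mem_toFinset.mp (Finset.max'_mem _ hne)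
  have hMub : ∀ y ∈ nuGt t a r (j'+1), y ≤ M := fun y hy =>
    Finset.le_max' _ y (Multiset.mem_toFinset.mpr hy)
  refine ⟨M, hMmem, hMub, ?_, hsub, hqj⟩
  intro x
  rw [Multiset.mem_filter]
  constructor
  · rintro ⟨hxg, hxD⟩
    obtain ⟨ℓ, hℓI', hxℓ⟩ := (mem_nuGt_iff t a r (j'+1) x).mp hxg
    obtain ⟨kx, hkx, hxe⟩ := (mem_nu_iff t a ℓ x).mp hxℓ
    obtain ⟨w, hw⟩ := hpar ℓ hℓI'
    -- x - D = (w + kx) - (a j - 1) =: integer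
    have hxD' : x = D + ((w + (kx : ℤ) - (a (j'+1) : ℤ) + 1 : ℤ) : ℚ) := by
      rw [hxe, ← hcjD]
      have hcl : ((t ℓ : ℚ) - (a ℓ : ℚ) + 1) / 2 = c ℓ := rfl
      rw [hcl, hw]; push_cast; ring
    set n : ℤ := w + (kx : ℤ) - (a (j'+1) : ℤ) + 1 with hn
    have hnpos : 0 < n := by
      by_contra hcon
      push_neg at hcon
      have : ((n : ℤ) : ℚ) ≤ 0 := by exact_mod_cast hcon
      rw [hxD'] at hxD; linarith
    refine ⟨n.toNat, by omega, ?_, ?_⟩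
    · have hxeM : D + ((n.toNat : ℕ) : ℚ) = x := by
        rw [hxD']; congr 1
        exact_mod_cast Int.toNat_of_nonneg (le_of_lt hnpos)
      rw [hxeM]; exact hMub x hxg
    · rw [hxD']; congr 1
      exact_mod_cast (Int.toNat_of_nonneg (le_of_lt hnpos)).symm
  · rintro ⟨k, hk1, hkM, rfl⟩
    have hDk : D < D + (k : ℚ) := by
      have : (1:ℚ) ≤ (k : ℚ) := by exact_mod_cast hk1
      linarith
    refine ⟨?_, hDk⟩
    obtain ⟨ℓM, hℓMI, hMℓ⟩ := (mem_nuGt_iff t a r (j'+1) M).mp hMmem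
    have hDM : D < M := lt_of_lt_of_le hDk hkM
    have hykey := key ℓM hℓMI M hMℓ hDM (D + (k : ℚ))
      ⟨(a (j'+1) : ℤ) - 1 + (k : ℤ), by rw [← hcjD]; push_cast; ring⟩
      (by linarith) hkM
    exact (mem_nuGt_iff t a r (j'+1) (D + (k:ℚ))).mpr ⟨ℓM, hℓMI, hykey⟩
end
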